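/- Every quasi-metric is metrizable after a power (Frink's lemma): if d : X × X → [0,∞) satisfies d(x,y) = d(y,x), d(x,y) = 0 iff x = y, and d(x,y) ≤ K·(d(x,z) + d(z,y)) for some K ≥ 1, then there exist α ∈ (0,1], a constant C ≥ 1, and a genuine metric ρ on X such that (1/C)·d(x,y)^α ≤ ρ(x,y) ≤ d(x,y)^α for all x, y. -/

import Mathlib

open Finset

private lemma frink_chain {X : Type*} (q : X → X → ℝ)
    (hq0 : ∀ x y, 0 ≤ q x y) (hqxx : ∀ x, q x x = 0)
    (hq2 : ∀ x y z, q x z ≤ Real.sqrt 2 * max (q x y) (q y z)) :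
    ∀ n (z : ℕ → X), q (z 0) (z n) ≤ 2 * ∑ i ∈ range n, q (z i) (z (i+1)) := by
  have hsqrt1 : (1:ℝ) ≤ Real.sqrt 2 := by
    have := Real.sqrt_le_sqrt (show (1:ℝ) ≤ 2 by norm_num)
    simpa using this
  have hsqrt2 : Real.sqrt 2 * Real.sqrt 2 = 2 := Real.mul_self_sqrt (by norm_num)
  intro n
  induction n using Nat.strong_induction_on with
  | _ n IH =>
    intro z
    rcases Nat.eq_zero_or_pos n with hn | hn
    · subst hn; simp [hqxx]
    classical
    set e : ℕ → ℝ := fun i => q (z i) (z (i+1)) with he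
    set S : ℝ := ∑ i ∈ range n, e i with hS
    have he0 : ∀ i, 0 ≤ e i := fun i => hq0 _ _
    have hS0 : 0 ≤ S := Finset.sum_nonneg fun i _ => he0 i
    have hpart : ∀ k, k ≤ n → ∑ i ∈ range k, e i ≤ S :=
      fun k hk => Finset.sum_le_sum_of_subset_of_nonneg (Finset.range_subset_range.2 hk)
        (fun i _ _ => he0 i)
    set P : ℕ → Prop := fun m => ∑ i ∈ range m, e i ≤ S/2 with hP
    set m := Nat.findGreatest P (n-1) with hm
    have hmle : m ≤ n - 1 := Nat.findGreatest_le _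
    have hmn : m < n := by omega
    have hPm : ∑ i ∈ range m, e i ≤ S/2 :=
      Nat.findGreatest_spec (Nat.zero_le _) (show P 0 by simp [hP]; linarith)
    have h1 : q (z 0) (z m) ≤ S := by
      calc q (z 0) (z m) ≤ 2 * ∑ i ∈ range m, e i := IH m hmn z
        _ ≤ 2 * (S/2) := by linarith
        _ = S := by ring
    have hem : e m ≤ S := by
      have := Finset.single_le_sum (f := e) (fun i _ => he0 i) (Finset.mem_range.2 hmn)
      linarith
    have h2 : q (z m) (z n) ≤ Real.sqrt 2 * S := by
      rcases eq_or_lt_of_le hmle with hEq | hlt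
      · have hm1 : m + 1 = n := by omega
        have : q (z m) (z n) = e m := by rw [he]; simp only; rw [hm1]
        rw [this]
        calc e m ≤ S := hem
          _ = 1 * S := (one_mul S).symm
          _ ≤ Real.sqrt 2 * S := mul_le_mul_of_nonneg_right hsqrt1 hS0
      · have hnot : ¬ P (m+1) :=
          Nat.findGreatest_is_greatest (Nat.lt_succ_self m) (by omega)
        have hgt : S/2 < ∑ i ∈ range (m+1), e i := by
          by_contra h
          exact hnot (by simpa [hP] using not_lt.1 h)
        have hB : ∑ i ∈ range (n-(m+1)), e (m+1+i) ≤ S/2 := by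
          have hsplit := Finset.sum_range_add_sum_Ico e (show m+1 ≤ n by omega)
          have hIco := Finset.sum_Ico_eq_sum_range e (m+1) n
          rw [hIco] at hsplit
          linarith
        have hsub : q (z (m+1)) (z n) ≤ 2 * ∑ i ∈ range (n-(m+1)), e (m+1+i) := by
          have hIH := IH (n-(m+1)) (by omega) (fun i => z (m+1+i))
          have hend : m+1+(n-(m+1)) = n := by omega
          rw [hend] at hIH
          calc q (z (m+1)) (z n)
              ≤ 2 * ∑ i ∈ range (n-(m+1)), q (z (m+1+i)) (z (m+1+(i+1))) := by
                simpa using hIH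
            _ = 2 * ∑ i ∈ range (n-(m+1)), e (m+1+i) := by congr 1
        have hsubS : q (z (m+1)) (z n) ≤ S := by linarith
        have := hq2 (z m) (z (m+1)) (z n)
        have hmax : max (q (z m) (z (m+1))) (q (z (m+1)) (z n)) ≤ S :=
          max_le hem hsubS
        calc q (z m) (z n) ≤ Real.sqrt 2 * max (q (z m) (z (m+1))) (q (z (m+1)) (z n)) := this
          _ ≤ Real.sqrt 2 * S := mul_le_mul_of_nonneg_left hmax (by linarith)
    have h3 := hq2 (z 0) (z m) (z n)
    have hmax : max (q (z 0) (z m)) (q (z m) (z n)) ≤ Real.sqrt 2 * S := by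
      apply max_le _ h2
      calc q (z 0) (z m) ≤ S := h1
        _ = 1 * S := (one_mul S).symm
        _ ≤ Real.sqrt 2 * S := mul_le_mul_of_nonneg_right hsqrt1 hS0
    calc q (z 0) (z n) ≤ Real.sqrt 2 * max (q (z 0) (z m)) (q (z m) (z n)) := h3
      _ ≤ Real.sqrt 2 * (Real.sqrt 2 * S) := mul_le_mul_of_nonneg_left hmax (by linarith)
      _ = 2 * S := by rw [← mul_assoc, hsqrt2]
open Finset

private def chainSet {X : Type*} (q : X → X → ℝ) (x y : X) : Set ℝ :=
  {s | ∃ n, ∃ z : ℕ → X, z 0 = x ∧ z n = y ∧ s = ∑ i ∈ range n, q (z i) (z (i+1))}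

private lemma mem_chainSet_self {X : Type*} (q : X → X → ℝ) (x y : X) :
    q x y ∈ chainSet q x y := by
  refine ⟨1, fun i => if i = 0 then x else y, by simp, by simp, by simp⟩

private lemma chainSet_lb {X : Type*} (q : X → X → ℝ)
    (hq0 : ∀ x y, 0 ≤ q x y) (hqxx : ∀ x, q x x = 0)
    (hq2 : ∀ x y z, q x z ≤ Real.sqrt 2 * max (q x y) (q y z))
    (x y : X) : ∀ s ∈ chainSet q x y, q x y / 2 ≤ s := by
  rintro s ⟨n, z, hz0, hzn, rfl⟩
  have := frink_chain q hq0 hqxx hq2 n z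
  rw [hz0, hzn] at this
  linarith

private lemma chainSet_symm_subset {X : Type*} (q : X → X → ℝ)
    (hqs : ∀ x y, q x y = q y x) (x y : X) :
    chainSet q x y ⊆ chainSet q y x := by
  rintro s ⟨n, z, hz0, hzn, rfl⟩
  refine ⟨n, fun i => z (n - i), by simpa, by simpa, ?_⟩
  have := Finset.sum_range_reflect (fun i => q (z i) (z (i+1))) n
  rw [← this]
  refine Finset.sum_congr rfl fun i hi => ?_
  have hi' : i < n := Finset.mem_range.1 hi
  have h1 : n - i - 1 = n - 1 - i := by omega
  have h2 : n - 1 - i + 1 = n - i := by omega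
  rw [hqs]
  simp only
  rw [show n - (i+1) = n - 1 - i by omega, h2]

private lemma chainSet_add {X : Type*} (q : X → X → ℝ) {x z y : X} {s t : ℝ}
    (hs : s ∈ chainSet q x z) (ht : t ∈ chainSet q z y) :
    s + t ∈ chainSet q x y := by
  obtain ⟨n, z1, h10, h1n, rfl⟩ := hs
  obtain ⟨m, z2, h20, h2m, rfl⟩ := ht
  refine ⟨n + m, fun i => if i < n then z1 i else z2 (i - n), ?_, ?_, ?_⟩
  · rcases Nat.eq_zero_or_pos n with h | h
    · subst h
      simp only [Nat.lt_irrefl, if_false, Nat.sub_zero]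
      rw [h20, ← h1n, h10]
    · simp [h, h10]
  · simp only [show ¬ (n + m < n) by omega, if_false]
    simpa using h2m
  · rw [Finset.sum_range_add]
    congr 1
    · refine Finset.sum_congr rfl fun i hi => ?_
      have hi' : i < n := Finset.mem_range.1 hi
      rcases eq_or_lt_of_le (Nat.succ_le_of_lt hi') with h | h
      · have hnot : ¬ (i+1 < n) := by omega
        beta_reduce
        rw [if_pos hi', if_neg hnot, show i+1-n = 0 from by omega, h20, ← h1n,
          show n = i+1 from by omega]
      · simp [hi', h]
    · refine Finset.sum_congr rfl fun i hi => ?_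
      simp only [show ¬ (n + i < n) by omega, show ¬ (n + i + 1 < n) by omega, if_false]
      rw [show n + i - n = i by omega, show n + i + 1 - n = i + 1 by omega]

private noncomputable def frinkRho {X : Type*} (q : X → X → ℝ) (x y : X) : ℝ :=
  sInf (chainSet q x y)

/-- Frink's lemma: every symmetric quasi-metric is comparable, after raising to a
suitable power `α ∈ (0,1]`, to a genuine metric. -/
theorem stmt_12 {X : Type*} (d : X → X → ℝ) (K : ℝ) (hK : 1 ≤ K)
    (hnonneg : ∀ x y, 0 ≤ d x y)
    (hsym : ∀ x y, d x y = d y x)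
    (hzero : ∀ x y, d x y = 0 ↔ x = y)
    (htri : ∀ x y z, d x y ≤ K * (d x z + d z y)) :
    ∃ (α : ℝ) (C : ℝ) (ρ : X → X → ℝ),
      0 < α ∧ α ≤ 1 ∧ 1 ≤ C ∧
      (∀ x y, 0 ≤ ρ x y) ∧
      (∀ x y, ρ x y = ρ y x) ∧
      (∀ x y, ρ x y = 0 ↔ x = y) ∧
      (∀ x y z, ρ x y ≤ ρ x z + ρ z y) ∧
      (∀ x y, (1 / C) * d x y ^ α ≤ ρ x y ∧ ρ x y ≤ d x y ^ α) := by
  have h2K : (1:ℝ) < 2*K := by linarith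
  have hs2 : (1:ℝ) < Real.sqrt 2 := by
    have := Real.sqrt_lt_sqrt (by norm_num : (0:ℝ) ≤ 1) (by norm_num : (1:ℝ) < 2)
    simpa using this
  set α : ℝ := Real.logb (2*K) (Real.sqrt 2) with hαdef
  have hα0 : 0 < α := Real.logb_pos h2K hs2
  have hα1 : α ≤ 1 := by
    have hsqle : Real.sqrt 2 ≤ 2*K := by
      have h4 : Real.sqrt 2 ≤ Real.sqrt (2*2) :=
        Real.sqrt_le_sqrt (by norm_num)
      rw [Real.sqrt_mul_self (by norm_num : (0:ℝ) ≤ 2)] at h4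
      linarith
    have := (Real.logb_le_logb h2K (by positivity) (by linarith)).2 hsqle
    rwa [Real.logb_self_eq_one h2K] at this
  have hpow : (2*K) ^ α = Real.sqrt 2 :=
    Real.rpow_logb (by linarith) h2K.ne' (by positivity)
  set q : X → X → ℝ := fun x y => d x y ^ α with hqdef
  have hq0 : ∀ x y, 0 ≤ q x y := fun x y => Real.rpow_nonneg (hnonneg x y) α
  have hqs : ∀ x y, q x y = q y x := fun x y => by simp only [hqdef, hsym x y]
  have hqz : ∀ x y, (q x y = 0 ↔ x = y) := fun x y => by
    rw [hqdef]; simp only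
    rw [Real.rpow_eq_zero (hnonneg x y) hα0.ne', hzero]
  have hqxx : ∀ x, q x x = 0 := fun x => (hqz x x).2 rfl
  have hq2 : ∀ x y z, q x z ≤ Real.sqrt 2 * max (q x y) (q y z) := by
    intro x y z
    have hmax0 : 0 ≤ max (d x y) (d y z) := le_max_of_le_left (hnonneg x y)
    have hd : d x z ≤ (2*K) * max (d x y) (d y z) := by
      have h0 := htri x z y
      have h1 := mul_le_mul_of_nonneg_left (le_max_left (d x y) (d y z))
        (by linarith : (0:ℝ) ≤ K)
      have h2 := mul_le_mul_of_nonneg_left (le_max_right (d x y) (d y z))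
        (by linarith : (0:ℝ) ≤ K)
      nlinarith
    calc q x z = d x z ^ α := rfl
      _ ≤ ((2*K) * max (d x y) (d y z)) ^ α := Real.rpow_le_rpow (hnonneg x z) hd hα0.le
      _ = (2*K) ^ α * (max (d x y) (d y z)) ^ α := Real.mul_rpow (by linarith) hmax0
      _ = Real.sqrt 2 * (max (d x y) (d y z)) ^ α := by rw [hpow]
      _ = Real.sqrt 2 * max (q x y) (q y z) := by
          congr 1
          rcases le_total (d x y) (d y z) with h | h
          · rw [max_eq_right h, show max (q x y) (q y z) = q y z from
              max_eq_right (Real.rpow_le_rpow (hnonneg x y) h hα0.le)]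
          · rw [max_eq_left h, show max (q x y) (q y z) = q x y from
              max_eq_left (Real.rpow_le_rpow (hnonneg y z) h hα0.le)]
  have hne : ∀ x y : X, (chainSet q x y).Nonempty :=
    fun x y => ⟨q x y, mem_chainSet_self q x y⟩
  have hlb := chainSet_lb q hq0 hqxx hq2
  have hbdd : ∀ x y : X, BddBelow (chainSet q x y) :=
    fun x y => ⟨q x y / 2, hlb x y⟩
  set ρ : X → X → ℝ := frinkRho q with hρdef
  have hρge : ∀ x y, q x y / 2 ≤ ρ x y := fun x y => le_csInf (hne x y) (hlb x y)
  have hρle : ∀ x y, ρ x y ≤ q x y :=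
    fun x y => csInf_le (hbdd x y) (mem_chainSet_self q x y)
  have hρ0 : ∀ x y, 0 ≤ ρ x y := fun x y =>
    le_trans (by have := hq0 x y; linarith) (hρge x y)
  refine ⟨α, 2, ρ, hα0, hα1, by norm_num, hρ0, ?_, ?_, ?_, ?_⟩
  · intro x y
    have : chainSet q x y = chainSet q y x :=
      Set.Subset.antisymm (chainSet_symm_subset q hqs x y) (chainSet_symm_subset q hqs y x)
    rw [hρdef]; simp only [frinkRho, this]
  · intro x y
    constructor
    · intro h
      have h1 := hρge x y
      have h2 := hq0 x y
      have : q x y = 0 := by linarith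
      exact (hqz x y).1 this
    · rintro rfl
      have h1 := hρle x x
      have h2 := hρ0 x x
      have := hqxx x
      linarith
  · intro x y z
    have key : ∀ s ∈ chainSet q x z, ∀ t ∈ chainSet q z y, ρ x y ≤ s + t :=
      fun s hs t ht => csInf_le (hbdd x y) (chainSet_add q hs ht)
    have h1 : ∀ s ∈ chainSet q x z, ρ x y - s ≤ ρ z y := fun s hs =>
      le_csInf (hne z y) (fun t ht => by linarith [key s hs t ht])
    have h2 : ρ x y - ρ z y ≤ ρ x z :=
      le_csInf (hne x z) (fun s hs => by linarith [h1 s hs])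
    linarith
  · intro x y
    refine ⟨?_, hρle x y⟩
    have := hρge x y
    have hq : q x y = d x y ^ α := rfl
    rw [← hq]
    linarith
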